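/- Let p be the empirical label distribution of N images under a classifier, and suppose H(p) > B(δ) where B(δ) = −(1−δ)log₂(1−δ) − δ log₂(δ/(C−1)) with 0 < δ < (C−1)/C. Then no class receives empirical probability at least 1−δ, i.e., maxᵢ pᵢ < 1−δ (contrapositive of the Trojan entropy bound). -/

import Mathlib

/-!
Let `j` be a class with `p j ≥ 1 - δ` and compare `p` with the reference distribution
`r = (1 - δ, δ/(C-1), …, δ/(C-1))`, whose entropy is `B(δ)`. Gibbs' inequality bounds `H(p)` by the
cross-entropy `-∑ pᵢ log rᵢ = -p_j log(1-δ) - (1-p_j) log(δ/(C-1))`, which is affine in `p_j`.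
Since `δ < (C-1)/C` means `δ/(C-1) < 1-δ`, it decreases in `p_j`, so it is at most its value
`B(δ)` at `p_j = 1 - δ`.
-/

open Real Finset

namespace Real

lemma negMulLog_le_sub_sub_mul_log {x y : ℝ} (hx : 0 ≤ x) (hy : 0 < y) :
    negMulLog x ≤ y - x - x * log y := by
  rcases hx.eq_or_lt with rfl | hx
  · simpa using hy.le
  have hlog : log (y / x) ≤ y / x - 1 := log_le_sub_one_of_pos (div_pos hy hx)
  rw [log_div hy.ne' hx.ne'] at hlog
  have hscaled := mul_le_mul_of_nonneg_left hlog hx.le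
  have hxy : x * (y / x - 1) = y - x := by field_simp
  rw [negMulLog]
  linarith

theorem sum_negMulLog_le_cross_entropy {ι : Type*} [Fintype ι] {p r : ι → ℝ}
    (hp : ∀ i, 0 ≤ p i) (hr : ∀ i, 0 < r i) (hsum : ∑ i, r i = ∑ i, p i) :
    ∑ i, negMulLog (p i) ≤ -∑ i, p i * log (r i) := by
  calc ∑ i, negMulLog (p i) ≤ ∑ i, (r i - p i - p i * log (r i)) :=
        sum_le_sum fun i _ ↦ negMulLog_le_sub_sub_mul_log (hp i) (hr i)
    _ = -∑ i, p i * log (r i) := by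
        rw [sum_sub_distrib, sum_sub_distrib, hsum, sub_self, zero_sub]

end Real

theorem sum_negMulLog_le_of_le_apply {ι : Type*} [Fintype ι] [DecidableEq ι]
    (hι : 1 < Fintype.card ι) {p : ι → ℝ} (hp0 : ∀ i, 0 ≤ p i) (hp1 : ∑ i, p i = 1)
    {δ : ℝ} (hδ0 : 0 < δ) (hδ : δ / (Fintype.card ι - 1) ≤ 1 - δ) {j : ι} (hj : 1 - δ ≤ p j) :
    ∑ i, negMulLog (p i) ≤
      -(1 - δ) * log (1 - δ) - δ * log (δ / (Fintype.card ι - 1)) := by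
  set K : ℝ := Fintype.card ι - 1
  have hK : 0 < K := by
    have : (1 : ℝ) < Fintype.card ι := by exact_mod_cast hι
    simp only [K]; linarith
  have hrest : 0 < δ / K := div_pos hδ0 hK
  set r : ι → ℝ := fun i ↦ if i = j then 1 - δ else δ / K
  have hr : ∀ i, 0 < r i := fun i ↦ by
    simp only [r]; split_ifs <;> linarith
  have hr1 : ∑ i, r i = 1 := by
    rw [← add_sum_erase _ _ (mem_univ j)]
    have hcard : ((univ.erase j).card : ℝ) = K := by
      rw [card_erase_of_mem (mem_univ j), card_univ, Nat.cast_sub hι.le, Nat.cast_one]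
    rw [sum_congr rfl fun i hi ↦ if_neg (ne_of_mem_erase hi), sum_const, nsmul_eq_mul, hcard]
    simp only [r, if_pos rfl]
    field_simp
    ring
  have hcross : ∑ i, p i * log (r i) =
      log (δ / K) + p j * (log (1 - δ) - log (δ / K)) := by
    have : ∀ i, p i * log (r i) =
        p i * log (δ / K) + if i = j then p j * (log (1 - δ) - log (δ / K)) else 0 := by
      intro i; simp only [r]; split_ifs with h <;> [subst h; skip] <;> ring
    simp only [this, sum_add_distrib, ← sum_mul, hp1, sum_ite_eq', mem_univ, if_true, one_mul]
  have hcoef : log (δ / K) ≤ log (1 - δ) := log_le_log hrest hδ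
  calc ∑ i, negMulLog (p i) ≤ -∑ i, p i * log (r i) :=
        sum_negMulLog_le_cross_entropy hp0 hr (by rw [hr1, hp1])
    _ ≤ _ := by rw [hcross]; nlinarith

/-- Contrapositive of the Trojan entropy bound: if the entropy score of a
distribution exceeds `B(δ)` with `0 < δ < (C-1)/C`, then no class has
empirical probability at least `1 - δ`. -/
theorem entropy_above_bound_no_dominant_class (C : ℕ) (hC : 2 ≤ C)
    (δ : ℝ) (hδ0 : 0 < δ) (hδ1 : δ < ((C : ℝ) - 1) / C)
    (p : Fin C → ℝ) (hp0 : ∀ i, 0 ≤ p i) (hp1 : ∑ i, p i = 1)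
    (hH : -(1 - δ) * Real.logb 2 (1 - δ) - δ * Real.logb 2 (δ / ((C : ℝ) - 1)) <
      -∑ i, p i * Real.logb 2 (p i)) :
    ∀ i, p i < 1 - δ := by
  intro j
  by_contra! hj
  have hC' : (2 : ℝ) ≤ C := by exact_mod_cast hC
  have hδ : δ / ((C : ℝ) - 1) ≤ 1 - δ := by
    rw [lt_div_iff₀ (by linarith)] at hδ1
    rw [div_le_iff₀ (by linarith)]
    linarith
  have hbound := sum_negMulLog_le_of_le_apply (ι := Fin C) (by simp; omega) hp0 hp1 hδ0
    (by simpa using hδ) hj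
  simp only [Fintype.card_fin] at hbound
  have hH' : (-(1 - δ) * log (1 - δ) - δ * log (δ / ((C : ℝ) - 1))) / log 2 <
      (∑ i, negMulLog (p i)) / log 2 := by
    convert hH using 1
    · simp only [logb]; ring
    · simp only [sum_div, negMulLog, logb, ← sum_neg_distrib]
      exact sum_congr rfl fun i _ ↦ by ring
  exact (div_lt_div_iff_of_pos_right (log_pos one_lt_two)).mp hH' |>.not_ge hbound
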